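/- Sine-coefficient equivariance error bound for the regular nonlinearity: for every δ with 0 ≤ δ ≤ 1 and every integer m ≥ 1, | (2/N) Σ_{t=0}^{N−1} sin(2π m t / N) · y(t + δ) − (2/N) Σ_{t=0}^{N−1} sin(2π m (t − δ) / N) · y(t) | ≤ (4π L_f / N) · ( ‖∂x‖₁ + m · ‖x‖₁ ). -/

import Mathlib

/-!
Sample by sample, `sin a · y(t + δ) - sin b · y(t)` with `a - b = 2πmδ/N` splits into
`sin a · (y(t + δ) - y(t))`, bounded via the Lipschitz constant `(2π/N)‖∂x‖₁` of the
trigonometric polynomial `x`, and `(sin a - sin b) · y(t)`, bounded via the phase shift and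
`|y| ≤ L_f ‖x‖₁`. Each sample error is thus at most `(2π L_f/N)(‖∂x‖₁ + m‖x‖₁)`, and averaging
with weight `2/N` doubles it.
-/

open Finset Real

noncomputable def trigPoly (P x₀ : ℝ) (s : Finset ℕ) (a b : ℕ → ℝ) (t : ℝ) : ℝ :=
  x₀ + ∑ k ∈ s, (a k * cos (2 * π * k * t / P) + b k * sin (2 * π * k * t / P))

lemma abs_mul_cos_add_mul_sin_le (a b θ : ℝ) : |a * cos θ + b * sin θ| ≤ |a| + |b| :=
  calc |a * cos θ + b * sin θ| ≤ |a| * |cos θ| + |b| * |sin θ| := by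
        simpa only [abs_mul] using abs_add_le (a * cos θ) (b * sin θ)
    _ ≤ |a| * 1 + |b| * 1 := by gcongr; exacts [abs_cos_le_one θ, abs_sin_le_one θ]
    _ = |a| + |b| := by ring

lemma abs_mul_cos_add_mul_sin_sub_le (a b θ φ : ℝ) :
    |(a * cos θ + b * sin θ) - (a * cos φ + b * sin φ)| ≤ (|a| + |b|) * |θ - φ| :=
  calc |(a * cos θ + b * sin θ) - (a * cos φ + b * sin φ)|
        = |a * (cos θ - cos φ) + b * (sin θ - sin φ)| := by ring_nf
    _ ≤ |a| * |cos θ - cos φ| + |b| * |sin θ - sin φ| := by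
        simpa only [abs_mul] using abs_add_le (a * (cos θ - cos φ)) (b * (sin θ - sin φ))
    _ ≤ |a| * |θ - φ| + |b| * |θ - φ| := by
        gcongr |a| * ?_ + |b| * ?_; exacts [abs_cos_sub_cos_le θ φ, abs_sin_sub_sin_le θ φ]
    _ = (|a| + |b|) * |θ - φ| := by ring

lemma abs_sin_mul_sub_sin_mul_le (α β u v : ℝ) :
    |sin α * u - sin β * v| ≤ |u - v| + |α - β| * |v| :=
  calc |sin α * u - sin β * v| = |sin α * (u - v) + (sin α - sin β) * v| := by ring_nf
    _ ≤ |sin α| * |u - v| + |sin α - sin β| * |v| := by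
        simpa only [abs_mul] using abs_add_le (sin α * (u - v)) ((sin α - sin β) * v)
    _ ≤ 1 * |u - v| + |α - β| * |v| := by
        gcongr ?_ * _ + ?_ * _; exacts [abs_sin_le_one α, abs_sin_sub_sin_le α β]
    _ = |u - v| + |α - β| * |v| := by ring

lemma abs_div_mul_sum_range_le {N : ℕ} {g : ℕ → ℝ} {c C : ℝ} (hc : 0 ≤ c) (hC : 0 ≤ C)
    (hg : ∀ t ∈ range N, |g t| ≤ C) : |c / N * ∑ t ∈ range N, g t| ≤ c * C := by
  rcases N.eq_zero_or_pos with rfl | hN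
  · simpa using mul_nonneg hc hC
  have hN' : (0 : ℝ) < N := Nat.cast_pos.mpr hN
  calc |c / N * ∑ t ∈ range N, g t| ≤ c / N * ∑ t ∈ range N, |g t| := by
        rw [abs_mul, abs_of_nonneg (by positivity)]
        gcongr
        exact abs_sum_le_sum_abs g _
    _ ≤ c / N * (N * C) := by
        gcongr
        simpa using sum_le_card_nsmul _ _ C hg
    _ = c * C := by field_simp

section TrigPoly

variable (P x₀ : ℝ) (s : Finset ℕ) (a b : ℕ → ℝ)

lemma abs_trigPoly_le (t : ℝ) : |trigPoly P x₀ s a b t| ≤ |x₀| + ∑ k ∈ s, (|a k| + |b k|) :=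
  (abs_add_le _ _).trans <| add_le_add le_rfl
    ((abs_sum_le_sum_abs _ _).trans (sum_le_sum fun _ _ => abs_mul_cos_add_mul_sin_le _ _ _))

lemma abs_trigPoly_sub_le (u t : ℝ) :
    |trigPoly P x₀ s a b u - trigPoly P x₀ s a b t|
      ≤ 2 * π / |P| * (∑ k ∈ s, k * (|a k| + |b k|)) * |u - t| := by
  have phase (k : ℕ) : |2 * π * k * u / P - 2 * π * k * t / P| = 2 * π * k / |P| * |u - t| := by
    rw [show 2 * π * k * u / P - 2 * π * k * t / P = 2 * π * k * (u - t) / P by ring,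
      abs_div, abs_mul, abs_of_nonneg (by positivity : (0 : ℝ) ≤ 2 * π * k)]
    ring
  calc |trigPoly P x₀ s a b u - trigPoly P x₀ s a b t|
        = |∑ k ∈ s, ((a k * cos (2 * π * k * u / P) + b k * sin (2 * π * k * u / P))
            - (a k * cos (2 * π * k * t / P) + b k * sin (2 * π * k * t / P)))| := by
        rw [trigPoly, trigPoly, add_sub_add_left_eq_sub, sum_sub_distrib]
    _ ≤ ∑ k ∈ s, (|a k| + |b k|) * (2 * π * k / |P| * |u - t|) :=
        (abs_sum_le_sum_abs _ _).trans <| sum_le_sum fun k _ =>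
          (abs_mul_cos_add_mul_sin_sub_le _ _ _ _).trans_eq (by rw [phase])
    _ = 2 * π / |P| * (∑ k ∈ s, k * (|a k| + |b k|)) * |u - t| := by
        rw [mul_sum, sum_mul]
        exact sum_congr rfl fun k _ => by ring

end TrigPoly

theorem sine_coefficient_equivariance_error_bound_general
    (N B : ℕ)
    (x0 : ℝ) (xa xb : ℕ → ℝ) (x : ℝ → ℝ)
    (hx : ∀ t : ℝ, x t = x0 + ∑ m ∈ Finset.Icc 1 B,
      (xa m * Real.cos (2 * Real.pi * m * t / N)
        + xb m * Real.sin (2 * Real.pi * m * t / N)))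
    (f : ℝ → ℝ) (Lf : ℝ) (hLf : 0 ≤ Lf)
    (hf : ∀ a b : ℝ, |f a - f b| ≤ Lf * |a - b|) (hf0 : f 0 = 0)
    (y : ℝ → ℝ) (hy : ∀ t : ℝ, y t = f (x t)) :
    ∀ (δ : ℝ), 0 ≤ δ → δ ≤ 1 → ∀ m : ℕ, 1 ≤ m →
      |(2 / (N : ℝ)) * (∑ t ∈ Finset.range N,
            Real.sin (2 * Real.pi * m * t / N) * y ((t : ℝ) + δ))
        - (2 / (N : ℝ)) * (∑ t ∈ Finset.range N,
            Real.sin (2 * Real.pi * m * ((t : ℝ) - δ) / N) * y t)|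
      ≤ (4 * Real.pi * Lf / N) *
          ((∑ k ∈ Finset.Icc 1 B, (k : ℝ) * (|xa k| + |xb k|))
            + (m : ℝ) * (|x0| + ∑ k ∈ Finset.Icc 1 B, (|xa k| + |xb k|))) := by
  intro δ hδ0 hδ1 m _
  set D := ∑ k ∈ Icc 1 B, (k : ℝ) * (|xa k| + |xb k|)
  set S := |x0| + ∑ k ∈ Icc 1 B, (|xa k| + |xb k|)
  have hx' : x = trigPoly N x0 (Icc 1 B) xa xb := funext hx
  have hy_le (t : ℝ) : |y t| ≤ Lf * S := by
    simpa [hy, hf0] using (hf (x t) 0).trans (by rw [hx', sub_zero]; gcongr; apply abs_trigPoly_le)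
  have hy_shift (t : ℝ) : |y (t + δ) - y t| ≤ Lf * (2 * π / N * D * δ) := by
    rw [hy, hy]
    refine (hf _ _).trans ?_
    have := abs_trigPoly_sub_le N x0 (Icc 1 B) xa xb (t + δ) t
    rw [Nat.abs_cast, add_sub_cancel_left, abs_of_nonneg hδ0] at this
    rw [hx']; gcongr
  have hsample : ∀ t ∈ range N,
      |sin (2 * π * m * t / N) * y (t + δ) - sin (2 * π * m * (t - δ) / N) * y t|
        ≤ 2 * π * Lf / N * (D + m * S) := by
    intro t _
    have phase : |2 * π * m * t / N - 2 * π * m * (t - δ) / N| = 2 * π * m * δ / N := by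
      rw [← abs_of_nonneg (by positivity : 0 ≤ 2 * π * m * δ / N)]; ring_nf
    calc _ ≤ Lf * (2 * π / N * D * δ) + 2 * π * m * δ / N * (Lf * S) := by
          refine (abs_sin_mul_sub_sin_mul_le _ _ _ _).trans ?_
          rw [phase]; gcongr; exacts [hy_shift t, hy_le t]
      _ ≤ Lf * (2 * π / N * D * 1) + 2 * π * m * 1 / N * (Lf * S) := by gcongr
      _ = 2 * π * Lf / N * (D + m * S) := by ring
  rw [← mul_sub, ← sum_sub_distrib]
  calc _ ≤ 2 * (2 * π * Lf / N * (D + m * S)) :=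
        abs_div_mul_sum_range_le zero_le_two (by positivity) hsample
    _ = _ := by ring

/-- sin-coefficient equivariance error bound for the regular
nonlinearity. -/
theorem sine_coefficient_equivariance_error_bound
    (N B : ℕ) (hN : 1 ≤ N) (hB : 1 ≤ B)
    (x0 : ℝ) (xa xb : ℕ → ℝ) (x : ℝ → ℝ)
    (hx : ∀ t : ℝ, x t = x0 + ∑ m ∈ Finset.Icc 1 B,
      (xa m * Real.cos (2 * Real.pi * m * t / N)
        + xb m * Real.sin (2 * Real.pi * m * t / N)))
    (f : ℝ → ℝ) (Lf : ℝ) (hLf : 0 ≤ Lf)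
    (hf : ∀ a b : ℝ, |f a - f b| ≤ Lf * |a - b|) (hf0 : f 0 = 0)
    (y : ℝ → ℝ) (hy : ∀ t : ℝ, y t = f (x t)) :
    ∀ (δ : ℝ), 0 ≤ δ → δ ≤ 1 → ∀ m : ℕ, 1 ≤ m →
      |(2 / (N : ℝ)) * (∑ t ∈ Finset.range N,
            Real.sin (2 * Real.pi * m * t / N) * y ((t : ℝ) + δ))
        - (2 / (N : ℝ)) * (∑ t ∈ Finset.range N,
            Real.sin (2 * Real.pi * m * ((t : ℝ) - δ) / N) * y t)|
      ≤ (4 * Real.pi * Lf / N) *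
          ((∑ k ∈ Finset.Icc 1 B, (k : ℝ) * (|xa k| + |xb k|))
            + (m : ℝ) * (|x0| + ∑ k ∈ Finset.Icc 1 B, (|xa k| + |xb k|))) :=
  sine_coefficient_equivariance_error_bound_general N B x0 xa xb x hx f Lf hLf hf hf0 y hy
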